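/- Let Q ⊂ ℂ be a nonempty compact set, f : Q → ℂ continuous with zero set Z = {k ∈ Q : f(k) = 0}. For n ∈ ℕ let G_n = (1/n)(ℤ + iℤ) and define Γ_n = {k ∈ G_n ∩ Q : |f(k)| ≤ 1/log(n)} for n ≥ 2. Suppose: (a) for each k₀ ∈ Z there are C, ν > 0 and a neighborhood of k₀ in which |f(k)| ≤ C|k-k₀|^ν; (b) each k₀ ∈ Z has points of G_n ∩ Q within distance 1/n for all large n; (c) every sequence k_n ∈ Γ_n has its accumulation points in Z. If additionally |f(k_n)| → 0 along any sequence k_n ∈ Γ_n implies dist(k_n, Z) → 0, then d_H(Γ_n, Z) → 0 as n → ∞ (when Z ≠ ∅). -/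

import Mathlib

/-!
Near a zero `k₀` the decay `|f k| ≤ C |k - k₀|^ν` puts every grid point within `1/n` of `k₀`
below `C n^(-ν)`, which is eventually below the threshold `1/log n`; so each zero is within `1/n`
of `Γ_n`, and compactness of `Z` makes this uniform. Conversely, on the compact set of points of
`Q` at distance `≥ ε` from `Z` the continuous function `|f|` has a positive minimum, which
eventually exceeds `1/log n`; so `Γ_n` lies in the `ε`-neighbourhood of `Z`.
-/

open Filter Metric Topology

/-- The grid `G_n = (1/n)(ℤ + iℤ)` in the complex plane. -/
def latticeGrid (n : ℕ) : Set ℂ :=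
  {z : ℂ | ∃ a b : ℤ, z = ((a : ℂ) + (b : ℂ) * Complex.I) / (n : ℂ)}

theorem eventually_mul_one_div_rpow_le_one_div_log {C ν : ℝ} (hC : 0 < C) (hν : 0 < ν) :
    ∀ᶠ n : ℕ in atTop, C * (1 / (n : ℝ)) ^ ν ≤ 1 / Real.log n := by
  have hlog := (tendsto_natCast_atTop_atTop (R := ℝ)).eventually
    ((isLittleO_log_rpow_atTop hν).bound (inv_pos.2 hC))
  filter_upwards [hlog, eventually_gt_atTop 1] with n hn hn1
  have hn1 : (1 : ℝ) < n := by exact_mod_cast hn1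
  have hlog_pos : 0 < Real.log n := Real.log_pos hn1
  have hpow_pos : 0 < (n : ℝ) ^ ν := Real.rpow_pos_of_pos (by linarith) ν
  rw [Real.norm_of_nonneg hlog_pos.le, Real.norm_of_nonneg hpow_pos.le] at hn
  rw [Real.div_rpow zero_le_one (by linarith), Real.one_rpow, mul_one_div,
    div_le_div_iff₀ hpow_pos hlog_pos, one_mul]
  calc C * Real.log n ≤ C * (C⁻¹ * (n : ℝ) ^ ν) := by gcongr
    _ = (n : ℝ) ^ ν := by field_simp

theorem eventually_forall_norm_le_one_div_log_of_rpow_decay {α E : Type*}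
    [SeminormedAddCommGroup α] [Norm E] {f : α → E} {k₀ : α} {C ν : ℝ} (hC : 0 < C)
    (hν : 0 < ν) (hdecay : ∀ᶠ k in 𝓝 k₀, ‖f k‖ ≤ C * ‖k - k₀‖ ^ ν) :
    ∀ᶠ n : ℕ in atTop, ∀ k, ‖k - k₀‖ ≤ 1 / (n : ℝ) → ‖f k‖ ≤ 1 / Real.log n := by
  obtain ⟨δ, hδ, hball⟩ := Metric.eventually_nhds_iff.1 hdecay
  filter_upwards [eventually_mul_one_div_rpow_le_one_div_log hC hν,
    tendsto_one_div_atTop_nhds_zero_nat.eventually_lt_const hδ] with n hthreshold hnδ k hk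
  calc ‖f k‖ ≤ C * ‖k - k₀‖ ^ ν := hball (by rw [dist_eq_norm]; linarith)
    _ ≤ C * (1 / (n : ℝ)) ^ ν := by gcongr
    _ ≤ 1 / Real.log n := hthreshold

theorem IsCompact.sep_eq_zero {α E : Type*} [TopologicalSpace α] [T2Space α]
    [TopologicalSpace E] [Zero E] [T1Space E] {Q : Set α} {f : α → E} (hQ : IsCompact Q)
    (hf : ContinuousOn f Q) : IsCompact {k ∈ Q | f k = 0} :=
  hQ.of_isClosed_subset (hf.preimage_isClosed_of_isClosed hQ.isClosed isClosed_singleton)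
    fun _ hk => hk.1

theorem IsCompact.exists_pos_forall_norm_lt_imp_infDist_lt {α E : Type*} [PseudoMetricSpace α]
    [NormedAddCommGroup E] {Q : Set α} {f : α → E} (hQ : IsCompact Q) (hf : ContinuousOn f Q)
    {ε : ℝ} (hε : 0 < ε) :
    ∃ δ > 0, ∀ x ∈ Q, ‖f x‖ < δ → infDist x {k ∈ Q | f k = 0} < ε := by
  set K := Q ∩ {x | ε ≤ infDist x {k ∈ Q | f k = 0}}
  have hK : IsCompact K := hQ.inter_right (isClosed_le continuous_const (continuous_infDist_pt _))
  have hfK : ∀ x ∈ K, 0 < ‖f x‖ := by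
    rintro x ⟨hxQ, hxε⟩
    exact norm_pos_iff.2 fun hfx =>
      hε.not_ge (hxε.trans_eq (infDist_zero_of_mem (show x ∈ {k ∈ Q | f k = 0} from ⟨hxQ, hfx⟩)))
  obtain ⟨δ, hδ, hδK⟩ := hK.exists_forall_le' (hf.norm.mono Set.inter_subset_left) hfK
  refine ⟨δ, hδ, fun x hxQ hfx => lt_of_not_ge fun hxε => ?_⟩
  exact (hδK x ⟨hxQ, hxε⟩).not_gt hfx

theorem IsCompact.eventually_forall_infDist_le {ι α : Type*} [PseudoMetricSpace α] {l : Filter ι}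
    {Z : Set α} {A : ι → Set α} (hZ : IsCompact Z)
    (h : ∀ z ∈ Z, Tendsto (fun i => infDist z (A i)) l (𝓝 0)) {ε : ℝ} (hε : 0 < ε) :
    ∀ᶠ i in l, ∀ x ∈ Z, infDist x (A i) ≤ ε := by
  obtain ⟨t, htZ, hcover⟩ := hZ.elim_nhds_subcover (fun z => ball z (ε / 2))
    fun z _ => ball_mem_nhds z (half_pos hε)
  have hcenters : ∀ᶠ i in l, ∀ z ∈ t, infDist z (A i) < ε / 2 :=
    (Finset.eventually_all t).2 fun z hz => (h z (htZ z hz)).eventually_lt_const (half_pos hε)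
  filter_upwards [hcenters] with i hi x hx
  obtain ⟨z, hzt, hxz⟩ := Set.mem_iUnion₂.1 (hcover hx)
  calc infDist x (A i) ≤ infDist z (A i) + dist x z := infDist_le_infDist_add_dist
    _ ≤ ε / 2 + ε / 2 := add_le_add (hi z hzt).le (mem_ball.1 hxz).le
    _ = ε := add_halves ε

theorem tendsto_hausdorffDist_of_forall_infDist_le {ι α : Type*} [PseudoMetricSpace α]
    {l : Filter ι} {A : ι → Set α} {B : Set α}
    (h₁ : ∀ ε > 0, ∀ᶠ i in l, ∀ x ∈ A i, infDist x B ≤ ε)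
    (h₂ : ∀ ε > 0, ∀ᶠ i in l, ∀ x ∈ B, infDist x (A i) ≤ ε) :
    Tendsto (fun i => hausdorffDist (A i) B) l (𝓝 0) := by
  rw [Metric.tendsto_nhds]
  intro ε hε
  filter_upwards [h₁ (ε / 2) (half_pos hε), h₂ (ε / 2) (half_pos hε)] with i hA hB
  rw [Real.dist_0_eq_abs, abs_of_nonneg hausdorffDist_nonneg]
  exact (hausdorffDist_le_of_infDist (half_pos hε).le hA hB).trans_lt (half_lt_self hε)

theorem thresholding_converges_general
    (Q : Set ℂ) (f : ℂ → ℂ)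
    (hQ : IsCompact Q) (hf : ContinuousOn f Q)
    (Z : Set ℂ) (hZ : Z = {k ∈ Q | f k = 0})
    (Γ : ℕ → Set ℂ)
    (hΓ : ∀ n, Γ n = {k ∈ latticeGrid n ∩ Q | ‖f k‖ ≤ 1 / Real.log n})
    -- (a) polynomial decay of |f| near each zero
    (ha : ∀ k₀ ∈ Z, ∃ C > (0 : ℝ), ∃ ν > (0 : ℝ), ∀ᶠ k in nhds k₀,
      ‖f k‖ ≤ C * ‖k - k₀‖ ^ ν)
    -- (b) each zero is approximated by grid points within distance 1/n for large n
    (hb : ∀ k₀ ∈ Z, ∀ᶠ n : ℕ in atTop, ∃ j ∈ latticeGrid n ∩ Q, ‖j - k₀‖ ≤ 1 / (n : ℝ)) :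
    Tendsto (fun n => hausdorffDist (Γ n) Z) atTop (nhds 0) := by
  have hlog : Tendsto (fun n : ℕ => 1 / Real.log n) atTop (𝓝 0) :=
    (Real.tendsto_log_atTop.comp tendsto_natCast_atTop_atTop).inv_tendsto_atTop.congr
      fun n => (one_div _).symm
  refine tendsto_hausdorffDist_of_forall_infDist_le (fun ε hε => ?_) fun ε hε => ?_
  · obtain ⟨δ, hδ, hQδ⟩ := hQ.exists_pos_forall_norm_lt_imp_infDist_lt hf hε
    filter_upwards [hlog.eventually_lt_const hδ] with n hn x hx
    rw [hΓ] at hx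
    exact (hZ ▸ hQδ x hx.1.2 (hx.2.trans_lt hn)).le
  · refine (hZ ▸ hQ.sep_eq_zero hf).eventually_forall_infDist_le (fun k₀ hk₀ => ?_) hε
    obtain ⟨C, hC, ν, hν, hdecay⟩ := ha k₀ hk₀
    refine squeeze_zero' (Eventually.of_forall fun n => infDist_nonneg) ?_
      tendsto_one_div_atTop_nhds_zero_nat
    filter_upwards [hb k₀ hk₀,
      eventually_forall_norm_le_one_div_log_of_rpow_decay hC hν hdecay] with n ⟨j, hj, hjk₀⟩ hfj
    calc infDist k₀ (Γ n) ≤ dist k₀ j := infDist_le_dist_of_mem (hΓ n ▸ ⟨hj, hfj j hjk₀⟩)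
      _ ≤ 1 / (n : ℝ) := by rwa [dist_comm, dist_eq_norm]

/-- Convergence of the thresholding algorithm: with `Z = {k ∈ Q : f(k) = 0}` nonempty and
`Γ_n = {k ∈ G_n ∩ Q : |f(k)| ≤ 1/log n}`, under the listed hypotheses (polynomial decay
near zeros, approximation of zeros by grid points, accumulation of accepted points in `Z`,
and the distance condition), we have `d_H(Γ_n, Z) → 0`. -/
theorem thresholding_converges
    (Q : Set ℂ) (f : ℂ → ℂ)
    (hQ : IsCompact Q) (hQne : Q.Nonempty) (hf : ContinuousOn f Q)
    (Z : Set ℂ) (hZ : Z = {k ∈ Q | f k = 0}) (hZne : Z.Nonempty)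
    (Γ : ℕ → Set ℂ)
    (hΓ : ∀ n, Γ n = {k ∈ latticeGrid n ∩ Q | ‖f k‖ ≤ 1 / Real.log n})
    -- (a) polynomial decay of |f| near each zero
    (ha : ∀ k₀ ∈ Z, ∃ C > (0 : ℝ), ∃ ν > (0 : ℝ), ∀ᶠ k in nhds k₀,
      ‖f k‖ ≤ C * ‖k - k₀‖ ^ ν)
    -- (b) each zero is approximated by grid points within distance 1/n for large n
    (hb : ∀ k₀ ∈ Z, ∀ᶠ n : ℕ in atTop, ∃ j ∈ latticeGrid n ∩ Q, ‖j - k₀‖ ≤ 1 / (n : ℝ))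
    -- (c) accumulation points of sequences of accepted points lie in Z
    (hc : ∀ k : ℕ → ℂ, (∀ n, k n ∈ Γ n) → ∀ x : ℂ, MapClusterPt x atTop k → x ∈ Z)
    -- additional hypothesis: |f(k_n)| → 0 along accepted points forces dist(k_n, Z) → 0
    (hd : ∀ k : ℕ → ℂ, (∀ n, k n ∈ Γ n) →
      Tendsto (fun n => ‖f (k n)‖) atTop (nhds 0) →
      Tendsto (fun n => infDist (k n) Z) atTop (nhds 0)) :
    Tendsto (fun n => hausdorffDist (Γ n) Z) atTop (nhds 0) :=
  thresholding_converges_general Q f hQ hf Z hZ Γ hΓ ha hb
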